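/- arXiv:2007.00122 — 5 statements merged into one kernel-verified Lean document; each statement's English description precedes it below -/
import Mathlib

section
/- Let N ≥ 2 and let m_1, …, m_N satisfy 0 < m_i < 1 for every i and m̄ := (1/N) Σ_{i=1}^N m_i > 1 − 2/N. Fix i ∈ {1,…,N} and let ζ : ℝ^N → [0,∞) be a C² function such that the function x ↦ (ζ(x)^{−m_i} |∂²_{x_i x_i} ζ(x)|)^{1/(1−m_i)}, defined to be 0 at points where ζ(x) = 0 (assuming ∂²_{x_i x_i} ζ = 0 wherever ζ = 0), is integrable on ℝ^N with integral K. For n > 0 define ζ_n(x) := ζ(n^{−(1−m_1)} x_1, …, n^{−(1−m_N)} x_N). Then ∫_{ℝ^N} (ζ_n(x)^{−m_i} |∂²_{x_i x_i} ζ_n(x)|)^{1/(1−m_i)} dx = n^{−γ} K with γ := 2 − N(1 − m̄), and γ > 0; in particular these integrals tend to 0 as n → ∞. -/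
/-!
Substituting `y_j = n^{-(1-m_j)} x_j` turns `∫ (ζ_n^{-m_i} |∂²_{ii} ζ_n|)^{1/(1-m_i)}` into `K`
times two powers of `n`: the chain rule gives `∂²_{ii} ζ_n = n^{-2(1-m_i)} (∂²_{ii} ζ)(y)`, which
the exponent `1/(1-m_i)` turns into `n^{-2}`, and the Jacobian contributes
`∏_j n^{1-m_j} = n^{N(1-m̄)}`. The total exponent `N(1-m̄) - 2 = -γ` is negative precisely because
`m̄ > 1 - 2/N`.
-/

open MeasureTheory

/-- Second partial derivative of `f` in the `i`-th coordinate direction. -/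
noncomputable def pd2 {N : ℕ} (i : Fin N) (f : (Fin N → ℝ) → ℝ) (x : Fin N → ℝ) : ℝ :=
  deriv (deriv (fun s => f (Function.update x i s))) (x i)

/-- The integrand `(ζ^{-m_i} |∂²_{x_i x_i} ζ|)^{1/(1-m_i)}`, set to `0` where `ζ = 0`. -/
noncomputable def cutoffIntegrand {N : ℕ} (mi : ℝ) (i : Fin N)
    (f : (Fin N → ℝ) → ℝ) (x : Fin N → ℝ) : ℝ :=
  if f x = 0 then 0 else (f x ^ (-mi) * |pd2 i f x|) ^ (1 / (1 - mi))

open Finset Real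

lemma pd2_comp_mul {N : ℕ} (i : Fin N) (c : Fin N → ℝ) (f : (Fin N → ℝ) → ℝ) (x : Fin N → ℝ) :
    pd2 i (fun x => f (c * x)) x = c i ^ 2 * pd2 i f (c * x) := by
  have hslice : (fun s => f (c * Function.update x i s))
      = fun s => f (Function.update (c * x) i (c i * s)) := by
    funext s
    rw [Function.update_mul, Function.update_eq_self]
  have hderiv : deriv (fun s => f (Function.update (c * x) i (c i * s)))
      = fun s => c i * deriv (fun t => f (Function.update (c * x) i t)) (c i * s) := by
    funext s
    exact deriv_comp_mul_left (c i) (fun t => f (Function.update (c * x) i t)) s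
  simp only [pd2, hslice, hderiv, deriv_const_mul_field', deriv_comp_mul_left, smul_eq_mul,
    Pi.mul_apply]
  ring

lemma cutoffIntegrand_comp_mul {N : ℕ} (mi : ℝ) (i : Fin N) (c : Fin N → ℝ)
    (f : (Fin N → ℝ) → ℝ) (hf : ∀ x, 0 ≤ f x) (x : Fin N → ℝ) :
    cutoffIntegrand mi i (fun x => f (c * x)) x
      = (c i ^ 2) ^ (1 / (1 - mi)) * cutoffIntegrand mi i f (c * x) := by
  unfold cutoffIntegrand
  split_ifs
  · rw [mul_zero]
  · rw [pd2_comp_mul, abs_mul, abs_sq, mul_left_comm,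
      mul_rpow (sq_nonneg _) (mul_nonneg (rpow_nonneg (hf _) _) (abs_nonneg _))]

lemma integral_comp_mul_pi {ι E : Type*} [Fintype ι] [NormedAddCommGroup E] [NormedSpace ℝ E]
    (c : ι → ℝ) (hc : ∀ j, c j ≠ 0) (g : (ι → ℝ) → E) :
    ∫ x, g (c * x) = |∏ j, c j|⁻¹ • ∫ x, g x := by
  classical
  -- `e` gives the change of variables for arbitrary `g`, `L` its Jacobian `∏ j, c j`.
  let e : (ι → ℝ) ≃ᵐ (ι → ℝ) :=
    MeasurableEquiv.piCongrRight fun j => MeasurableEquiv.mulLeft₀ (c j) (hc j)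
  let L : (ι → ℝ) →ₗ[ℝ] (ι → ℝ) := Matrix.toLin' (Matrix.diagonal c)
  have hLe : ⇑L = ⇑e := by
    funext x j
    simp only [L, Matrix.toLin'_apply, Matrix.mulVec_diagonal]
    rfl
  have hdet : LinearMap.det L = ∏ j, c j := by
    rw [LinearMap.det_toLin', Matrix.det_diagonal]
  have hmap := Measure.map_linearMap_addHaar_eq_smul_addHaar (volume : Measure (ι → ℝ))
    (f := L) (hdet ▸ prod_ne_zero_iff.2 fun j _ => hc j)
  rw [hdet, hLe] at hmap
  calc ∫ x, g (c * x) = ∫ x, g (e x) ∂volume := rfl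
    _ = _ := by
      rw [← e.measurableEmbedding.integral_map, hmap, integral_smul_measure,
        ENNReal.toReal_ofReal (abs_nonneg _), abs_inv]

lemma integral_cutoffIntegrand_comp_mul {N : ℕ} (mi : ℝ) (i : Fin N) (c : Fin N → ℝ)
    (hc : ∀ j, c j ≠ 0) (f : (Fin N → ℝ) → ℝ) (hf : ∀ x, 0 ≤ f x) :
    ∫ x, cutoffIntegrand mi i (fun x => f (c * x)) x
      = (c i ^ 2) ^ (1 / (1 - mi)) * (|∏ j, c j|⁻¹ * ∫ x, cutoffIntegrand mi i f x) := by
  simp only [cutoffIntegrand_comp_mul mi i c f hf, integral_const_mul,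
    integral_comp_mul_pi c hc (cutoffIntegrand mi i f), smul_eq_mul]

lemma rpow_neg_sq_rpow_one_div {n a : ℝ} (hn : 0 < n) (ha : a ≠ 0) :
    ((n ^ (-a)) ^ 2) ^ (1 / a) = n ^ (-2 : ℝ) := by
  rw [← rpow_natCast, ← rpow_mul hn.le, ← rpow_mul hn.le]
  congr 1
  field_simp
  norm_num

lemma inv_prod_rpow_neg {ι : Type*} (s : Finset ι) {n : ℝ} (hn : 0 < n) (a : ι → ℝ) :
    (∏ j ∈ s, n ^ (-a j))⁻¹ = n ^ (∑ j ∈ s, a j) := by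
  rw [← rpow_sum_of_pos hn, sum_neg_distrib, rpow_neg hn.le, inv_inv]

theorem cutoff_scaling_general (N : ℕ) (m : Fin N → ℝ)
    (hm : ∀ i, 0 < m i ∧ m i < 1)
    (mbar : ℝ) (hmbar : mbar = (1 / (N : ℝ)) * ∑ i, m i)
    (hH2 : 1 - 2 / (N : ℝ) < mbar)
    (i : Fin N) (ζ : (Fin N → ℝ) → ℝ)
    (hζnn : ∀ x, 0 ≤ ζ x)
    (K : ℝ)
    (hK : (∫ x, cutoffIntegrand (m i) i ζ x) = K)
    (γ : ℝ) (hγ : γ = 2 - (N : ℝ) * (1 - mbar)) :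
    0 < γ ∧
    ∀ n : ℝ, 0 < n →
      (∫ x, cutoffIntegrand (m i) i
          (fun x => ζ (fun j => n ^ (-(1 - m j)) * x j)) x) = n ^ (-γ) * K := by
  have hNpos : (0 : ℝ) < N := Nat.cast_pos.2 i.pos
  have hsum : ∑ j, (1 - m j) = N * (1 - mbar) := by
    rw [hmbar, sum_sub_distrib, sum_const, card_univ, Fintype.card_fin, nsmul_one]
    field_simp
  refine ⟨?_, fun n hn => ?_⟩
  · have := (lt_div_iff₀' hNpos).1 (by linarith : 1 - mbar < 2 / N)
    linarith
  have hc : ∀ j, 0 < n ^ (-(1 - m j)) := fun j => rpow_pos_of_pos hn _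
  calc ∫ x, cutoffIntegrand (m i) i (fun x => ζ (fun j => n ^ (-(1 - m j)) * x j)) x
      = ((n ^ (-(1 - m i))) ^ 2) ^ (1 / (1 - m i)) * (|∏ j, n ^ (-(1 - m j))|⁻¹ * K) :=
        hK ▸ integral_cutoffIntegrand_comp_mul (m i) i _ (fun j => (hc j).ne') ζ hζnn
    _ = n ^ (-2 : ℝ) * (n ^ (∑ j, (1 - m j)) * K) := by
        rw [rpow_neg_sq_rpow_one_div hn (by linarith [hm i]),
          abs_of_pos (prod_pos fun j _ => hc j), inv_prod_rpow_neg _ hn]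
    _ = n ^ (-γ) * K := by
        rw [← mul_assoc, ← rpow_add hn, hsum, hγ]
        ring_nf

/-- anisotropic scaling of the cutoff integrals. With
`ζ_n(x) = ζ(n^{-(1-m_1)}x_1, …, n^{-(1-m_N)}x_N)` one has
`∫ (ζ_n^{-m_i}|∂²_{ii}ζ_n|)^{1/(1-m_i)} = n^{-γ} K` where `γ = 2 - N(1-m̄) > 0`. -/
theorem cutoff_scaling (N : ℕ) (hN : 2 ≤ N) (m : Fin N → ℝ)
    (hm : ∀ i, 0 < m i ∧ m i < 1)
    (mbar : ℝ) (hmbar : mbar = (1 / (N : ℝ)) * ∑ i, m i)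
    (hH2 : 1 - 2 / (N : ℝ) < mbar)
    (i : Fin N) (ζ : (Fin N → ℝ) → ℝ)
    (hζnn : ∀ x, 0 ≤ ζ x) (hζC2 : ContDiff ℝ 2 ζ)
    (hζ0 : ∀ x, ζ x = 0 → pd2 i ζ x = 0)
    (K : ℝ) (hKint : Integrable (cutoffIntegrand (m i) i ζ))
    (hK : (∫ x, cutoffIntegrand (m i) i ζ x) = K)
    (γ : ℝ) (hγ : γ = 2 - (N : ℝ) * (1 - mbar)) :
    0 < γ ∧
    ∀ n : ℝ, 0 < n →
      (∫ x, cutoffIntegrand (m i) i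
          (fun x => ζ (fun j => n ^ (-(1 - m j)) * x j)) x) = n ^ (-γ) * K :=
  cutoff_scaling_general N m hm mbar hmbar hH2 i ζ hζnn K hK γ hγ
end

section
/- Let N ≥ 2 and let m_1, …, m_N satisfy 0 < m_i ≤ 1 for every i and m̄ := (1/N) Σ_{i=1}^N m_i > 1 − 2/N; set α := N/(N(m̄ − 1) + 2), σ_i := 1/N + (m̄ − m_i)/2. Let δ > 0 and θ_i ≥ 1 satisfy 1/σ_i < δθ_i < 2/(1 − m_i) for every i (the right inequality read as no constraint when m_i = 1), and let r > 0 satisfy r^{2/θ_i − δ(1−m_i)} ≥ N δ m_i (δ m_i + 1) θ_i² / (α (δ min_j{σ_j θ_j} − 1)) for every i. Then the function F̄(y) := (Σ_{i=1}^N |y_i|^{θ_i})^{−δ} satisfies the supersolution inequality Σ_{i=1}^N [∂²_{y_i y_i}(F̄^{m_i}) + α σ_i ∂_{y_i}(y_i F̄)] ≤ 0 at every point y with Σ_{i=1}^N |y_i|^{θ_i} ≥ r and y_i ≠ 0 for all i. -/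
/-!
Along the `i`-th coordinate line the barrier is `s ↦ (|s| ^ θᵢ + A) ^ (-δ)` with `A ≥ 0`, so both
partial derivatives are explicit. Write `S = ∑ⱼ |yⱼ| ^ θⱼ` and `μ = minⱼ σⱼ θⱼ`. In the diffusion
term the part carrying `θᵢ - 1` is nonpositive, and since `|yᵢ| ^ (2θᵢ - 2) ≤ S ^ (2 - 2/θᵢ)` the
other part is at most `δmᵢ(δmᵢ + 1)θᵢ² S ^ (-δ) / S ^ (2/θᵢ - δ(1 - mᵢ))`; the exponent is
nonnegative because `δθᵢ < 2/(1 - mᵢ)`, so `S ≥ r` and the choice of `r` bound it by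
`α(δμ - 1)/N · S ^ (-δ)`. The drift term is at most `ασᵢ S ^ (-δ) - αδμ |yᵢ| ^ θᵢ S ^ (-δ - 1)`.
Summing over `i` with `∑ σᵢ = 1` and `∑ |yᵢ| ^ θᵢ = S` gives exactly
`α(δμ - 1) S ^ (-δ) + α S ^ (-δ) - αδμ S ^ (-δ) = 0`.
-/

/-- First partial derivative of `f` in the `i`-th coordinate direction. -/
noncomputable def pd1 {N : ℕ} (i : Fin N) (f : (Fin N → ℝ) → ℝ) (x : Fin N → ℝ) : ℝ :=
  deriv (fun s => f (Function.update x i s)) (x i)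

open Real Finset Topology

section AbsRpow

variable {t A : ℝ}

lemma abs_rpow_mul_self_mul_self (ht : t ≠ 0) (a : ℝ) : |t| ^ a * t * t = |t| ^ (a + 2) := by
  rw [rpow_add (abs_pos.2 ht), rpow_two, sq_abs, mul_assoc, sq]

-- Unlike Mathlib's `hasDerivAt_abs_rpow`, no condition `1 < c`: away from `0` any exponent works.
lemma hasDerivAt_abs_rpow_of_ne_zero (c : ℝ) (ht : t ≠ 0) :
    HasDerivAt (fun s => |s| ^ c) (c * |t| ^ (c - 2) * t) t := by
  refine ((hasDerivAt_rpow_const (p := c) (Or.inl (abs_pos.2 ht).ne')).comp t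
    (hasDerivAt_abs ht)).congr_deriv ?_
  rw [show c - 1 = c - 2 + 1 by ring, rpow_add_one (abs_pos.2 ht).ne']
  linear_combination c * |t| ^ (c - 2) * abs_mul_sign t

lemma hasDerivAt_abs_rpow_sub_two_mul_self (c : ℝ) (ht : t ≠ 0) :
    HasDerivAt (fun s => |s| ^ (c - 2) * s) ((c - 1) * |t| ^ (c - 2)) t := by
  refine ((hasDerivAt_abs_rpow_of_ne_zero (c - 2) ht).mul (hasDerivAt_id' t)).congr_deriv ?_
  have h := abs_rpow_mul_self_mul_self ht (c - 2 - 2)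
  rw [sub_add_cancel] at h
  linear_combination (c - 2) * h

lemma hasDerivAt_abs_rpow_add_rpow (c p : ℝ) (ht : t ≠ 0) (hA : 0 ≤ A) :
    HasDerivAt (fun s => (|s| ^ c + A) ^ p)
      (c * |t| ^ (c - 2) * t * p * (|t| ^ c + A) ^ (p - 1)) t :=
  ((hasDerivAt_abs_rpow_of_ne_zero c ht).add_const A).rpow_const
    (Or.inl (add_pos_of_pos_of_nonneg (rpow_pos_of_pos (abs_pos.2 ht) c) hA).ne')

lemma deriv_deriv_abs_rpow_add_rpow (c p : ℝ) (ht : t ≠ 0) (hA : 0 ≤ A) :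
    deriv (deriv fun s => (|s| ^ c + A) ^ p) t
      = p * c * (c - 1) * |t| ^ (c - 2) * (|t| ^ c + A) ^ (p - 1)
        + p * (p - 1) * c ^ 2 * |t| ^ (2 * c - 2) * (|t| ^ c + A) ^ (p - 2) := by
  have hderiv : deriv (fun s => (|s| ^ c + A) ^ p) =ᶠ[𝓝 t]
      fun s => c * p * (|s| ^ (c - 2) * s * (|s| ^ c + A) ^ (p - 1)) := by
    filter_upwards [eventually_ne_nhds ht] with s hs
    rw [(hasDerivAt_abs_rpow_add_rpow c p hs hA).deriv]
    ring
  rw [hderiv.deriv_eq]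
  refine (((hasDerivAt_abs_rpow_sub_two_mul_self c ht).mul
    (hasDerivAt_abs_rpow_add_rpow c (p - 1) ht hA)).const_mul (c * p)).deriv.trans ?_
  have hsq : |t| ^ (c - 2) * t * (|t| ^ (c - 2) * t) = |t| ^ (2 * c - 2) := by
    rw [show |t| ^ (c - 2) * t * (|t| ^ (c - 2) * t) = |t| ^ (c - 2) * |t| ^ (c - 2) * t * t
      by ring, ← rpow_add (abs_pos.2 ht), abs_rpow_mul_self_mul_self ht]
    ring_nf
  rw [show p - 1 - 1 = p - 2 by ring]
  linear_combination (c ^ 2 * p * (p - 1) * (|t| ^ c + A) ^ (p - 2)) * hsq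

lemma deriv_mul_abs_rpow_add_rpow (c p : ℝ) (ht : t ≠ 0) (hA : 0 ≤ A) :
    deriv (fun s => s * (|s| ^ c + A) ^ p) t
      = (|t| ^ c + A) ^ p + p * c * |t| ^ c * (|t| ^ c + A) ^ (p - 1) := by
  refine ((hasDerivAt_id' t).mul (hasDerivAt_abs_rpow_add_rpow c p ht hA)).deriv.trans ?_
  have h := abs_rpow_mul_self_mul_self ht (c - 2)
  rw [sub_add_cancel] at h
  linear_combination (p * c * (|t| ^ c + A) ^ (p - 1)) * h

end AbsRpow

lemma sum_abs_rpow_update {ι : Type*} [Fintype ι] [DecidableEq ι] (θ y : ι → ℝ) (i : ι) (s : ℝ) :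
    ∑ j, |Function.update y i s j| ^ θ j = |s| ^ θ i + ∑ j ∈ univ \ {i}, |y j| ^ θ j := by
  rw [← sum_update_of_mem (mem_univ i)]
  exact sum_congr rfl fun j _ => Function.apply_update (fun j x => |x| ^ θ j) y i s j

section PartialDerivatives

variable {N : ℕ} (θ : Fin N → ℝ) (q : ℝ) {y : Fin N → ℝ} {i : Fin N}

lemma pd2_sum_abs_rpow_rpow (hy : y i ≠ 0) :
    pd2 i (fun z => (∑ j, |z j| ^ θ j) ^ q) y
      = q * θ i * (θ i - 1) * |y i| ^ (θ i - 2) * (∑ j, |y j| ^ θ j) ^ (q - 1)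
        + q * (q - 1) * θ i ^ 2 * |y i| ^ (2 * θ i - 2) * (∑ j, |y j| ^ θ j) ^ (q - 2) := by
  have hA : 0 ≤ ∑ j ∈ univ \ {i}, |y j| ^ θ j := sum_nonneg fun j _ => by positivity
  simp only [pd2, sum_abs_rpow_update]
  rw [deriv_deriv_abs_rpow_add_rpow _ _ hy hA, ← sum_abs_rpow_update θ y i (y i),
    Function.update_eq_self]

lemma pd1_mul_sum_abs_rpow_rpow (hy : y i ≠ 0) :
    pd1 i (fun z => z i * (∑ j, |z j| ^ θ j) ^ q) y
      = (∑ j, |y j| ^ θ j) ^ q + q * θ i * |y i| ^ θ i * (∑ j, |y j| ^ θ j) ^ (q - 1) := by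
  have hA : 0 ≤ ∑ j ∈ univ \ {i}, |y j| ^ θ j := sum_nonneg fun j _ => by positivity
  simp only [pd1, sum_abs_rpow_update, Function.update_self]
  rw [deriv_mul_abs_rpow_add_rpow _ _ hy hA, ← sum_abs_rpow_update θ y i (y i),
    Function.update_eq_self]

end PartialDerivatives

section Exponents

variable {n mbar mi : ℝ}

lemma sigma_pos {σi : ℝ} (hH2 : 1 - 2 / n < mbar) (hmi : mi ≤ 1)
    (hσ : σi = 1 / n + (mbar - mi) / 2) : 0 < σi := by
  have : 2 / n = 2 * (1 / n) := by ring
  linarith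

lemma alpha_pos {α : ℝ} (hn : 0 < n) (hH2 : 1 - 2 / n < mbar)
    (hα : α = n / (n * (mbar - 1) + 2)) : 0 < α := by
  have h := mul_lt_mul_of_pos_left (show -(2 / n) < mbar - 1 by linarith) hn
  rw [mul_neg, mul_div_cancel₀ _ hn.ne'] at h
  exact hα ▸ div_pos hn (by linarith)

lemma sum_sigma_eq_one {N : ℕ} {m σ : Fin N → ℝ} (hN : N ≠ 0)
    (hmbar : mbar = 1 / N * ∑ i, m i) (hσ : ∀ i, σ i = 1 / N + (mbar - m i) / 2) :
    ∑ i, σ i = 1 := by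
  simp only [hσ, sum_add_distrib, sum_const, card_univ, Fintype.card_fin, nsmul_eq_mul,
    ← sum_div, sum_sub_distrib, hmbar]
  field_simp
  ring

lemma two_div_sub_mul_one_sub_nonneg {δ θ : ℝ} (hθ : 0 < θ) (hmi : mi ≤ 1)
    (hhigh : mi < 1 → δ * θ < 2 / (1 - mi)) : 0 ≤ 2 / θ - δ * (1 - mi) := by
  rcases hmi.lt_or_eq with hlt | rfl
  · have h := (lt_div_iff₀ (sub_pos.2 hlt)).1 (hhigh hlt)
    rw [sub_nonneg, le_div_iff₀ hθ]
    linarith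
  · simp only [sub_self, mul_zero, sub_zero]
    positivity

end Exponents

lemma one_lt_mul_ciInf {ι : Type*} [Finite ι] [Nonempty ι] {δ : ℝ} {f : ι → ℝ}
    (h : ∀ j, 1 < δ * f j) : 1 < δ * ⨅ j, f j := by
  obtain ⟨j, hj⟩ := exists_eq_ciInf_of_finite (f := f)
  exact hj ▸ h j

section Estimates

variable {t S θ : ℝ}

lemma abs_rpow_two_mul_sub_two_le (hθ : 1 ≤ θ) (htS : |t| ^ θ ≤ S) :
    |t| ^ (2 * θ - 2) ≤ S ^ (2 - 2 / θ) := by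
  have hθ0 : θ ≠ 0 := by positivity
  calc |t| ^ (2 * θ - 2) = (|t| ^ θ) ^ (2 - 2 / θ) := by
        rw [← rpow_mul (abs_nonneg t)]
        congr 1
        field_simp
    _ ≤ S ^ (2 - 2 / θ) :=
        rpow_le_rpow (by positivity) htS (sub_nonneg.2 (div_le_self zero_le_two hθ))

lemma diffusion_le {δ m r K : ℝ} (hδ : 0 < δ) (hm : 0 < m) (hθ : 1 ≤ θ)
    (he : 0 ≤ 2 / θ - δ * (1 - m)) (hr : 0 < r) (hrS : r ≤ S) (htS : |t| ^ θ ≤ S) (hK : 0 < K)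
    (hrK : δ * m * (δ * m + 1) * θ ^ 2 / K ≤ r ^ (2 / θ - δ * (1 - m))) :
    -δ * m * θ * (θ - 1) * |t| ^ (θ - 2) * S ^ (-δ * m - 1)
      + -δ * m * (-δ * m - 1) * θ ^ 2 * |t| ^ (2 * θ - 2) * S ^ (-δ * m - 2)
      ≤ K * S ^ (-δ) := by
  set e := 2 / θ - δ * (1 - m) with he_def
  set C := δ * m * (δ * m + 1) * θ ^ 2
  have hS : 0 < S := hr.trans_le hrS
  have hfirst : 0 ≤ δ * m * θ * (θ - 1) * |t| ^ (θ - 2) * S ^ (-δ * m - 1) := by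
    have := sub_nonneg.2 hθ
    positivity
  have hCK : C ≤ K * S ^ e := calc
    C ≤ K * r ^ e := (div_le_iff₀' hK).1 hrK
    _ ≤ K * S ^ e := by gcongr
  have hsecond : C * |t| ^ (2 * θ - 2) * S ^ (-δ * m - 2) ≤ K * S ^ (-δ) := calc
    _ ≤ C * S ^ (2 - 2 / θ) * S ^ (-δ * m - 2) := by
        gcongr
        exact abs_rpow_two_mul_sub_two_le hθ htS
    _ = C * S ^ (-δ) / S ^ e := by
        rw [mul_assoc, mul_div_assoc, ← rpow_add hS, ← rpow_sub hS, he_def]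
        ring_nf
    _ ≤ K * S ^ (-δ) := by
        rw [div_le_iff₀ (by positivity)]
        calc C * S ^ (-δ) ≤ K * S ^ e * S ^ (-δ) := by gcongr
          _ = K * S ^ (-δ) * S ^ e := by ring
  have hC : -δ * m * (-δ * m - 1) * θ ^ 2 = C := by ring
  rw [hC]
  linarith

lemma drift_le {α σ δ θ μ u S : ℝ} (hα : 0 ≤ α) (hδ : 0 ≤ δ) (hμ : μ ≤ σ * θ) (hu : 0 ≤ u)
    (hS : 0 ≤ S) :
    α * σ * (S ^ (-δ) + -δ * θ * u * S ^ (-δ - 1))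
      ≤ α * σ * S ^ (-δ) - α * δ * μ * (u * S ^ (-δ - 1)) := by
  have := mul_nonneg (mul_nonneg (mul_nonneg hα hδ) (sub_nonneg.2 hμ))
    (mul_nonneg hu (rpow_nonneg hS (-δ - 1)))
  linarith

end Estimates

lemma pd2_barrier_rpow_add_pd1_le {N : ℕ} {θ y : Fin N → ℝ} {i : Fin N}
    {δ mi r K α σi μ : ℝ} (hy : y i ≠ 0) (hδ : 0 < δ) (hmi : 0 < mi ∧ mi ≤ 1) (hθ : 1 ≤ θ i)
    (hhigh : mi < 1 → δ * θ i < 2 / (1 - mi)) (hr : 0 < r) (hrS : r ≤ ∑ j, |y j| ^ θ j)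
    (hK : 0 < K) (hrK : δ * mi * (δ * mi + 1) * θ i ^ 2 / K ≤ r ^ (2 / θ i - δ * (1 - mi)))
    (hα : 0 ≤ α) (hμ : μ ≤ σi * θ i) :
    pd2 i (fun z => ((∑ j, |z j| ^ θ j) ^ (-δ)) ^ mi) y
      + α * σi * pd1 i (fun z => z i * (∑ j, |z j| ^ θ j) ^ (-δ)) y
      ≤ K * (∑ j, |y j| ^ θ j) ^ (-δ) + α * σi * (∑ j, |y j| ^ θ j) ^ (-δ)
        - α * δ * μ * (|y i| ^ θ i * (∑ j, |y j| ^ θ j) ^ (-δ - 1)) := by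
  have hpow : (fun z : Fin N → ℝ => ((∑ j, |z j| ^ θ j) ^ (-δ)) ^ mi)
      = fun z => (∑ j, |z j| ^ θ j) ^ (-δ * mi) :=
    funext fun z => (rpow_mul (sum_nonneg fun j _ => by positivity) _ _).symm
  have hyS : |y i| ^ θ i ≤ ∑ j, |y j| ^ θ j :=
    single_le_sum (f := fun j => |y j| ^ θ j) (fun j _ => by positivity) (mem_univ i)
  have hdiffusion := diffusion_le hδ hmi.1 hθ
    (two_div_sub_mul_one_sub_nonneg (by linarith) hmi.2 hhigh) hr hrS hyS hK hrK
  have hdrift := drift_le (u := |y i| ^ θ i) hα hδ.le hμ (by positivity) (hr.trans_le hrS).le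
  rw [hpow, pd2_sum_abs_rpow_rpow _ _ hy, pd1_mul_sum_abs_rpow_rpow _ _ hy]
  linarith

theorem upper_barrier_supersolution_general (N : ℕ) (m : Fin N → ℝ)
    (hm : ∀ i, 0 < m i ∧ m i ≤ 1)
    (mbar α : ℝ) (σ : Fin N → ℝ)
    (hmbar : mbar = (1 / (N : ℝ)) * ∑ i, m i)
    (hH2 : 1 - 2 / (N : ℝ) < mbar)
    (hα : α = (N : ℝ) / ((N : ℝ) * (mbar - 1) + 2))
    (hσ : ∀ i, σ i = 1 / (N : ℝ) + (mbar - m i) / 2)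
    (δ : ℝ) (hδ : 0 < δ) (θ : Fin N → ℝ) (hθ : ∀ i, 1 ≤ θ i)
    (hlow : ∀ i, 1 / σ i < δ * θ i)
    (hhigh : ∀ i, m i < 1 → δ * θ i < 2 / (1 - m i))
    (r : ℝ) (hr : 0 < r)
    (hrbig : ∀ i, (N : ℝ) * δ * m i * (δ * m i + 1) * θ i ^ 2
        / (α * (δ * (⨅ j, σ j * θ j) - 1)) ≤ r ^ (2 / θ i - δ * (1 - m i)))
    (Fbar : (Fin N → ℝ) → ℝ)
    (hFbar : ∀ y : Fin N → ℝ, Fbar y = (∑ i, |y i| ^ θ i) ^ (-δ)) :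
    ∀ y : Fin N → ℝ, r ≤ ∑ i, |y i| ^ θ i → (∀ i, y i ≠ 0) →
      ∑ i, (pd2 i (fun z => Fbar z ^ m i) y
        + α * σ i * pd1 i (fun z => z i * Fbar z) y) ≤ 0 := by
  obtain rfl : Fbar = fun y => (∑ i, |y i| ^ θ i) ^ (-δ) := funext hFbar
  intro y hy hy0
  have hN : 0 < N := Nat.pos_of_ne_zero <| by
    rintro rfl
    simp only [univ_eq_empty, sum_empty] at hy
    linarith
  have : Nonempty (Fin N) := ⟨⟨0, hN⟩⟩
  have hNpos : (0 : ℝ) < N := Nat.cast_pos.2 hN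
  set S := ∑ i, |y i| ^ θ i
  have hS : 0 < S := hr.trans_le hy
  have hσpos i : 0 < σ i := sigma_pos hH2 (hm i).2 (hσ i)
  have hαpos : 0 < α := alpha_pos hNpos hH2 hα
  set μ := ⨅ j, σ j * θ j
  have hμ : 1 < δ * μ := one_lt_mul_ciInf fun j => by
    have := (div_lt_iff₀ (hσpos j)).1 (hlow j)
    linarith
  calc _ ≤ ∑ i, (α * (δ * μ - 1) / N * S ^ (-δ) + α * σ i * S ^ (-δ)
        - α * δ * μ * (|y i| ^ θ i * S ^ (-δ - 1))) :=
      sum_le_sum fun i _ => pd2_barrier_rpow_add_pd1_le (hy0 i) hδ (hm i) (hθ i) (hhigh i) hr hy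
        (div_pos (mul_pos hαpos (by linarith)) hNpos)
        (by rw [div_div_eq_mul_div]; convert hrbig i using 2; ring)
        hαpos.le (ciInf_le (Set.finite_range _).bddBelow i)
    _ = 0 := by
      simp only [sum_sub_distrib, sum_add_distrib, sum_const, card_univ, Fintype.card_fin,
        nsmul_eq_mul, ← mul_sum, ← sum_mul, sum_sigma_eq_one hN.ne' hmbar hσ,
        rpow_sub_one hS.ne']
      field_simp
      ring

/-- the anisotropic upper barrier `F̄(y) = (Σ_i |y_i|^{θ_i})^{-δ}` is a
supersolution of the stationary profile equation on the outer domain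
`{Σ_i |y_i|^{θ_i} ≥ r}` (away from the coordinate hyperplanes). -/
theorem upper_barrier_supersolution (N : ℕ) (hN : 2 ≤ N) (m : Fin N → ℝ)
    (hm : ∀ i, 0 < m i ∧ m i ≤ 1)
    (mbar α : ℝ) (σ : Fin N → ℝ)
    (hmbar : mbar = (1 / (N : ℝ)) * ∑ i, m i)
    (hH2 : 1 - 2 / (N : ℝ) < mbar)
    (hα : α = (N : ℝ) / ((N : ℝ) * (mbar - 1) + 2))
    (hσ : ∀ i, σ i = 1 / (N : ℝ) + (mbar - m i) / 2)
    (δ : ℝ) (hδ : 0 < δ) (θ : Fin N → ℝ) (hθ : ∀ i, 1 ≤ θ i)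
    (hlow : ∀ i, 1 / σ i < δ * θ i)
    (hhigh : ∀ i, m i < 1 → δ * θ i < 2 / (1 - m i))
    (r : ℝ) (hr : 0 < r)
    (hrbig : ∀ i, (N : ℝ) * δ * m i * (δ * m i + 1) * θ i ^ 2
        / (α * (δ * (⨅ j, σ j * θ j) - 1)) ≤ r ^ (2 / θ i - δ * (1 - m i)))
    (Fbar : (Fin N → ℝ) → ℝ)
    (hFbar : ∀ y : Fin N → ℝ, Fbar y = (∑ i, |y i| ^ θ i) ^ (-δ)) :
    ∀ y : Fin N → ℝ, r ≤ ∑ i, |y i| ^ θ i → (∀ i, y i ≠ 0) →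
      ∑ i, (pd2 i (fun z => Fbar z ^ m i) y
        + α * σ i * pd1 i (fun z => z i * Fbar z) y) ≤ 0 :=
  upper_barrier_supersolution_general N m hm mbar α σ hmbar hH2 hα hσ δ hδ θ hθ hlow hhigh r hr
    hrbig Fbar hFbar
end

section
/- Let N ≥ 2, let δ > 0 and θ_1, …, θ_N ≥ 1, and let σ_1, …, σ_N be positive reals with Σ_{i=1}^N σ_i = 1 such that δ θ_i σ_i > 1 for every i. Then for every r > 0 the function F̄(y) := (Σ_{i=1}^N |y_i|^{θ_i})^{−δ} is integrable on the anisotropic outer domain Ω := { y ∈ ℝ^N : Σ_{i=1}^N |y_i|^{θ_i} ≥ r }, i.e. ∫_Ω (Σ_{i=1}^N |y_i|^{θ_i})^{−δ} dy < ∞. -/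
open MeasureTheory

/-- 1D integrability: `t ↦ (1 + |t|^θ)^(-p)` is integrable when `θ ≥ 1`, `p > 0`, `θ p > 1`. -/
lemma oneDim_integrable {θ p : ℝ} (hθ : 1 ≤ θ) (hp : 0 < p) (hθp : 1 < θ * p) :
    Integrable (fun t : ℝ => (1 + |t| ^ θ) ^ (-p)) := by
  have hθ0 : 0 < θ := lt_of_lt_of_le one_pos hθ
  set f : ℝ → ℝ := fun t => (1 + |t| ^ θ) ^ (-p) with hf
  have hbase : ∀ t : ℝ, 0 < 1 + |t| ^ θ := fun t => by positivity
  have hcont : Continuous f := by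
    apply Continuous.rpow_const
    · exact continuous_const.add (continuous_abs.rpow_const fun x => Or.inr hθ0.le)
    · exact fun x => Or.inl (hbase x).ne'
  -- integrability on Ioi 1
  have hIoi : IntegrableOn f (Set.Ioi (1 : ℝ)) := by
    have hg : IntegrableOn (fun x : ℝ => x ^ (-(θ * p))) (Set.Ioi (1 : ℝ)) :=
      integrableOn_Ioi_rpow_of_lt (by linarith) one_pos
    refine hg.mono' (hcont.aestronglyMeasurable.restrict) ?_
    rw [ae_restrict_iff' measurableSet_Ioi]
    filter_upwards with x hx
    have hx1 : (1 : ℝ) < x := hx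
    have hx0 : (0 : ℝ) < x := lt_trans one_pos hx1
    have habs : |x| = x := abs_of_pos hx0
    have h1 : x ^ θ ≤ 1 + |x| ^ θ := by
      rw [habs]; linarith
    have hxθ : (0 : ℝ) < x ^ θ := Real.rpow_pos_of_pos hx0 θ
    have h2 : (1 + |x| ^ θ) ^ (-p) ≤ (x ^ θ) ^ (-p) :=
      Real.rpow_le_rpow_of_nonpos hxθ h1 (by linarith)
    have h3 : (x ^ θ) ^ (-p) = x ^ (-(θ * p)) := by
      rw [← Real.rpow_mul hx0.le, mul_neg]
    rw [Real.norm_eq_abs, abs_of_nonneg (Real.rpow_nonneg (hbase x).le _), ← h3]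
    exact h2
  -- integrability on Iio (-1) by symmetry
  have hIio : IntegrableOn f (Set.Iio (-1 : ℝ)) := by
    have hmp : MeasurePreserving (fun x : ℝ => -x) volume volume :=
      Measure.measurePreserving_neg _
    have hemb : MeasurableEmbedding (fun x : ℝ => -x) :=
      (Homeomorph.neg ℝ).measurableEmbedding
    have := (hmp.integrableOn_comp_preimage hemb (f := f) (s := Set.Iio (-1 : ℝ)))
    rw [← this]
    have hpre : (fun x : ℝ => -x) ⁻¹' Set.Iio (-1 : ℝ) = Set.Ioi (1 : ℝ) := by
      ext x; simp [neg_lt, Set.mem_Iio, Set.mem_Ioi]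
    have hcomp : f ∘ (fun x : ℝ => -x) = f := by
      funext x; simp [hf, abs_neg]
    rw [hpre, hcomp]
    exact hIoi
  -- integrability on compact middle
  have hIcc : IntegrableOn f (Set.Icc (-1 : ℝ) 1) :=
    hcont.continuousOn.integrableOn_compact isCompact_Icc
  have : IntegrableOn f (Set.Iio (-1 : ℝ) ∪ (Set.Icc (-1 : ℝ) 1 ∪ Set.Ioi 1)) :=
    hIio.union (hIcc.union hIoi)
  refine integrableOn_univ.mp (this.mono_set ?_)
  intro x _
  rcases lt_or_ge x (-1) with h | h
  · exact Or.inl h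
  · rcases le_or_gt x 1 with h' | h'
    · exact Or.inr (Or.inl ⟨h, h'⟩)
    · exact Or.inr (Or.inr h')

/-- integrability of the anisotropic upper barrier
`F̄(y) = (Σ_i |y_i|^{θ_i})^{-δ}` on the outer domain `Ω = {Σ_i |y_i|^{θ_i} ≥ r}`,
under the condition `δ θ_i σ_i > 1` with `σ_i > 0`, `Σ σ_i = 1`. -/
theorem upper_barrier_integrable (N : ℕ) (hN : 2 ≤ N)
    (δ : ℝ) (hδ : 0 < δ) (θ : Fin N → ℝ) (hθ : ∀ i, 1 ≤ θ i)
    (σ : Fin N → ℝ) (hσpos : ∀ i, 0 < σ i) (hσsum : (∑ i, σ i) = 1)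
    (hδθσ : ∀ i, 1 < δ * θ i * σ i)
    (r : ℝ) (hr : 0 < r) :
    IntegrableOn (fun y : Fin N → ℝ => (∑ i, |y i| ^ θ i) ^ (-δ))
      {y : Fin N → ℝ | r ≤ ∑ i, |y i| ^ θ i} := by
  set c : ℝ := min r 1 / 2 with hc
  have hc0 : 0 < c := by
    have : 0 < min r 1 := lt_min hr one_pos
    positivity
  set g : Fin N → ℝ → ℝ := fun i t => (1 + |t| ^ θ i) ^ (-(δ * σ i)) with hg
  have hgint : ∀ i, Integrable (g i) := by
    intro i
    exact oneDim_integrable (hθ i) (mul_pos hδ (hσpos i))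
      (by have := hδθσ i; nlinarith [hσpos i, hθ i])
  have hGint : Integrable (fun y : Fin N → ℝ => c ^ (-δ) * ∏ i, g i (y i)) :=
    (Integrable.fintype_prod hgint).const_mul _
  -- measurability of the sum
  have hSmeas : Measurable (fun y : Fin N → ℝ => ∑ i, |y i| ^ θ i) := by
    apply Finset.measurable_sum
    intro i _
    have h1 : Measurable (fun t : ℝ => |t| ^ θ i) := by measurability
    exact h1.comp (measurable_pi_apply i)
  have hsmeas : MeasurableSet {y : Fin N → ℝ | r ≤ ∑ i, |y i| ^ θ i} :=
    measurableSet_le measurable_const hSmeas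
  have hrpm : Measurable (fun x : ℝ => x ^ (-δ)) := by measurability
  refine hGint.integrableOn.mono' ((hrpm.comp hSmeas).aestronglyMeasurable.restrict) ?_
  rw [ae_restrict_iff' hsmeas]
  filter_upwards with y hy
  have hy' : r ≤ ∑ i, |y i| ^ θ i := hy
  set S : ℝ := ∑ i, |y i| ^ θ i with hS
  have hS0 : 0 < S := lt_of_lt_of_le hr hy'
  have hterm : ∀ i, |y i| ^ θ i ≤ S := by
    intro i
    exact Finset.single_le_sum (fun j _ => Real.rpow_nonneg (abs_nonneg _) _)
      (Finset.mem_univ i)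
  have hkey : ∀ i, c * (1 + |y i| ^ θ i) ≤ S := by
    intro i
    have ha : 0 ≤ |y i| ^ θ i := Real.rpow_nonneg (abs_nonneg _) _
    have h1 : min r 1 ≤ r := min_le_left _ _
    have h2 : min r 1 * |y i| ^ θ i ≤ |y i| ^ θ i := by
      nlinarith [min_le_right r 1]
    have : min r 1 * (1 + |y i| ^ θ i) ≤ S + S := by
      have := hterm i; nlinarith
    rw [hc]; linarith
  have hprodpos : ∀ i, 0 < c * (1 + |y i| ^ θ i) := by
    intro i
    have : 0 ≤ |y i| ^ θ i := Real.rpow_nonneg (abs_nonneg _) _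
    nlinarith
  -- S^(-δ) = ∏ S^(-(δ σ i))
  have hsplit : S ^ (-δ) = ∏ i, S ^ (-(δ * σ i)) := by
    rw [← Real.rpow_sum_of_pos hS0]
    congr 1
    rw [Finset.sum_neg_distrib, ← Finset.mul_sum, hσsum, mul_one]
  have hfac : ∀ i, S ^ (-(δ * σ i)) ≤ (c * (1 + |y i| ^ θ i)) ^ (-(δ * σ i)) := by
    intro i
    exact Real.rpow_le_rpow_of_nonpos (hprodpos i) (hkey i)
      (neg_nonpos.mpr (mul_pos hδ (hσpos i)).le)
  have hbound : S ^ (-δ) ≤ ∏ i, (c * (1 + |y i| ^ θ i)) ^ (-(δ * σ i)) := by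
    rw [hsplit]
    exact Finset.prod_le_prod (fun i _ => Real.rpow_nonneg hS0.le _) (fun i _ => hfac i)
  have heq : ∏ i, (c * (1 + |y i| ^ θ i)) ^ (-(δ * σ i)) = c ^ (-δ) * ∏ i, g i (y i) := by
    have : ∀ i, (c * (1 + |y i| ^ θ i)) ^ (-(δ * σ i))
        = c ^ (-(δ * σ i)) * g i (y i) := by
      intro i
      rw [hg]
      exact Real.mul_rpow hc0.le (by positivity)
    rw [Finset.prod_congr rfl (fun i _ => this i), Finset.prod_mul_distrib,
      ← Real.rpow_sum_of_pos hc0]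
    congr 2
    rw [Finset.sum_neg_distrib, ← Finset.mul_sum, hσsum, mul_one]
  rw [Real.norm_eq_abs, abs_of_nonneg (Real.rpow_nonneg hS0.le _)]
  calc S ^ (-δ) ≤ ∏ i, (c * (1 + |y i| ^ θ i)) ^ (-(δ * σ i)) := hbound
    _ = c ^ (-δ) * ∏ i, g i (y i) := heq
end

section
/- Let N ≥ 2 and let m_1, …, m_N satisfy 0 < m_i < 1 for every i and 1 − 2/N < m̄ := (1/N) Σ_{i=1}^N m_i < 1; set α := N/(N(m̄ − 1) + 2), σ_i := 1/N + (m̄ − m_i)/2, and γ_i := (1 − m_i)/2. Let F : ℝ^N → (0,∞) be a C² function satisfying the stationary profile equation Σ_{i=1}^N [∂²_{y_i y_i}(F^{m_i}) + α σ_i ∂_{y_i}(y_i F)] = 0 at every point of ℝ^N, and for k > 0 define F_k(y) := k F(k^{γ_1} y_1, …, k^{γ_N} y_N). Then (a) F_k also satisfies the stationary profile equation at every point of ℝ^N; and (b) if F ∈ L¹(ℝ^N), then ∫_{ℝ^N} F_k(y) dy = k^{β} ∫_{ℝ^N} F(y) dy, where β := 1 − N(1 − m̄)/2 satisfies 0 <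 β < 1. -/
open MeasureTheory

/-- Derivative of a composition with multiplication by a constant (unconditional). -/
lemma deriv_comp_mul' (h : ℝ → ℝ) (c x : ℝ) :
    deriv (fun s => h (c * s)) x = c * deriv h (c * x) := by
  rcases eq_or_ne c 0 with rfl | hc
  · simp
  by_cases hd : DifferentiableAt ℝ h (c * x)
  · have h1 : HasDerivAt (fun s : ℝ => c * s) c x := by
      simpa using (hasDerivAt_id x).const_mul c
    have h2 := hd.hasDerivAt.comp x h1
    exact h2.deriv.trans (mul_comm _ _)
  · have hd2 : ¬ DifferentiableAt ℝ (fun s => h (c * s)) x := by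
      intro hdd
      apply hd
      have key : h = fun t => (fun s => h (c * s)) (c⁻¹ * t) := by
        funext t; simp [mul_inv_cancel_left₀ hc]
      rw [key]
      have h3 : DifferentiableAt ℝ (fun t : ℝ => c⁻¹ * t) (c * x) :=
        (differentiable_id.const_mul _).differentiableAt
      have h4 : DifferentiableAt ℝ (fun s => h (c * s)) ((fun t : ℝ => c⁻¹ * t) (c * x)) := by
        simpa [inv_mul_cancel_left₀ hc] using hdd
      exact h4.comp _ h3
    rw [deriv_zero_of_not_differentiableAt hd, deriv_zero_of_not_differentiableAt hd2, mul_zero]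

lemma update_scale {N : ℕ} (c y : Fin N → ℝ) (i : Fin N) (s : ℝ) :
    (fun j => c j * Function.update y i s j)
      = Function.update (fun j => c j * y j) i (c i * s) := by
  funext j
  rcases eq_or_ne j i with rfl | hj
  · simp
  · simp [Function.update_of_ne hj]

lemma pd1_mul_scale {N : ℕ} (a : ℝ) (c : Fin N → ℝ) (f : (Fin N → ℝ) → ℝ) (i : Fin N)
    (y : Fin N → ℝ) :
    pd1 i (fun z => a * f (fun j => c j * z j)) y
      = a * (c i * pd1 i f (fun j => c j * y j)) := by
  unfold pd1
  have e : (fun s => a * f (fun j => c j * Function.update y i s j))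
      = fun s => a * f (Function.update (fun j => c j * y j) i (c i * s)) := by
    funext s; rw [update_scale]
  rw [e]
  refine (deriv_comp_mul' (fun t => a * f (Function.update (fun j => c j * y j) i t))
      (c i) (y i)).trans ?_
  rw [deriv_const_mul_field, show ((fun j => c j * y j) i) = c i * y i from rfl]
  ring

lemma pd2_mul_scale {N : ℕ} (a : ℝ) (c : Fin N → ℝ) (f : (Fin N → ℝ) → ℝ) (i : Fin N)
    (y : Fin N → ℝ) :
    pd2 i (fun z => a * f (fun j => c j * z j)) y
      = a * (c i * (c i * pd2 i f (fun j => c j * y j))) := by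
  unfold pd2
  have e : (fun s => a * f (fun j => c j * Function.update y i s j))
      = fun s => a * f (Function.update (fun j => c j * y j) i (c i * s)) := by
    funext s; rw [update_scale]
  rw [e]
  have e2 : deriv (fun s => a * f (Function.update (fun j => c j * y j) i (c i * s)))
      = fun s => (fun t => c i * (a * deriv
          (fun t => f (Function.update (fun j => c j * y j) i t)) t)) (c i * s) := by
    funext s
    refine (deriv_comp_mul' (fun t => a * f (Function.update (fun j => c j * y j) i t))
        (c i) s).trans ?_
    rw [deriv_const_mul_field]
  rw [e2]
  refine (deriv_comp_mul' (fun t => c i * (a * deriv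
      (fun t => f (Function.update (fun j => c j * y j) i t)) t)) (c i) (y i)).trans ?_
  rw [deriv_const_mul_field, deriv_const_mul_field,
    show ((fun j => c j * y j) i) = c i * y i from rfl]
  ring

/-- the scaling `F_k(y) = k F(k^{γ_1}y_1, …, k^{γ_N}y_N)` with
`γ_i = (1-m_i)/2` maps solutions of the stationary profile equation to solutions, and
multiplies the mass by `k^β` with `β = 1 - N(1-m̄)/2 ∈ (0,1)`. -/
theorem stationary_scaling (N : ℕ) (hN : 2 ≤ N) (m : Fin N → ℝ)
    (hm : ∀ i, 0 < m i ∧ m i < 1)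
    (mbar α : ℝ) (σ : Fin N → ℝ)
    (hmbar : mbar = (1 / (N : ℝ)) * ∑ i, m i)
    (hH2 : 1 - 2 / (N : ℝ) < mbar) (hm1 : mbar < 1)
    (hα : α = (N : ℝ) / ((N : ℝ) * (mbar - 1) + 2))
    (hσ : ∀ i, σ i = 1 / (N : ℝ) + (mbar - m i) / 2)
    (F : (Fin N → ℝ) → ℝ) (hFpos : ∀ y, 0 < F y) (hFC2 : ContDiff ℝ 2 F)
    (hstat : ∀ y : Fin N → ℝ,
      ∑ i, (pd2 i (fun z => F z ^ m i) y + α * σ i * pd1 i (fun z => z i * F z) y) = 0)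
    (k : ℝ) (hk : 0 < k)
    (Fk : (Fin N → ℝ) → ℝ)
    (hFk : ∀ y : Fin N → ℝ, Fk y = k * F (fun i => k ^ ((1 - m i) / 2) * y i))
    (β : ℝ) (hβ : β = 1 - (N : ℝ) * (1 - mbar) / 2) :
    (∀ y : Fin N → ℝ,
      ∑ i, (pd2 i (fun z => Fk z ^ m i) y + α * σ i * pd1 i (fun z => z i * Fk z) y) = 0) ∧
    (0 < β ∧ β < 1) ∧
    (Integrable F → (∫ y, Fk y) = k ^ β * ∫ y, F y) := by
  have hNpos : (0:ℝ) < (N:ℝ) := by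
    have : (2:ℝ) ≤ (N:ℝ) := by exact_mod_cast hN
    linarith
  have hcpos : ∀ j : Fin N, (0:ℝ) < k ^ ((1 - m j) / 2) :=
    fun j => Real.rpow_pos_of_pos hk _
  refine ⟨?_, ⟨?_, ?_⟩, ?_⟩
  · -- part (a)
    intro y
    have key : ∀ i : Fin N,
        pd2 i (fun z => Fk z ^ m i) y + α * σ i * pd1 i (fun z => z i * Fk z) y
          = k * (pd2 i (fun z => F z ^ m i) (fun j => k ^ ((1 - m j) / 2) * y j)
              + α * σ i * pd1 i (fun z => z i * F z) (fun j => k ^ ((1 - m j) / 2) * y j)) := by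
      intro i
      have hterm2 : pd2 i (fun z => Fk z ^ m i) y
          = k ^ m i * (k ^ ((1 - m i) / 2) * (k ^ ((1 - m i) / 2) *
              pd2 i (fun z => F z ^ m i) (fun j => k ^ ((1 - m j) / 2) * y j))) := by
        have e1 : (fun z : Fin N → ℝ => Fk z ^ m i)
            = fun z => k ^ m i *
                (fun v : Fin N → ℝ => F v ^ m i) (fun j => k ^ ((1 - m j) / 2) * z j) := by
          funext z
          rw [hFk z]
          exact Real.mul_rpow hk.le (hFpos _).le
        rw [e1]
        exact pd2_mul_scale (k ^ m i) (fun j => k ^ ((1 - m j) / 2)) (fun v => F v ^ m i) i y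
      have hterm1 : pd1 i (fun z => z i * Fk z) y
          = k * pd1 i (fun z => z i * F z) (fun j => k ^ ((1 - m j) / 2) * y j) := by
        have e2 : (fun z : Fin N → ℝ => z i * Fk z)
            = fun z => (k / k ^ ((1 - m i) / 2)) *
                (fun v : Fin N → ℝ => v i * F v) (fun j => k ^ ((1 - m j) / 2) * z j) := by
          funext z
          rw [hFk z]
          have hb : ((fun v : Fin N → ℝ => v i * F v) (fun j => k ^ ((1 - m j) / 2) * z j))
              = (k ^ ((1 - m i) / 2) * z i) * F (fun j => k ^ ((1 - m j) / 2) * z j) := rfl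
          rw [hb]
          have hne := (hcpos i).ne'
          field_simp
        rw [e2]
        refine (pd1_mul_scale (k / k ^ ((1 - m i) / 2)) (fun j => k ^ ((1 - m j) / 2))
            (fun v => v i * F v) i y).trans ?_
        have hne := (hcpos i).ne'
        field_simp
      rw [hterm1, hterm2]
      have hpow : k ^ m i * (k ^ ((1 - m i) / 2) * k ^ ((1 - m i) / 2)) = k := by
        rw [← Real.rpow_add hk, ← Real.rpow_add hk,
          show m i + ((1 - m i) / 2 + (1 - m i) / 2) = 1 from by ring, Real.rpow_one]
      linear_combination
        (pd2 i (fun z => F z ^ m i) (fun j => k ^ ((1 - m j) / 2) * y j)) * hpow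
    rw [Finset.sum_congr rfl (fun i _ => key i), ← Finset.mul_sum,
      hstat (fun j => k ^ ((1 - m j) / 2) * y j), mul_zero]
  · -- 0 < β
    have h1 : 1 - mbar < 2 / (N : ℝ) := by linarith
    have h2 : (1 - mbar) * (N : ℝ) < 2 := (lt_div_iff₀ hNpos).mp h1
    rw [hβ]; nlinarith
  · -- β < 1
    rw [hβ]
    nlinarith [mul_pos hNpos (by linarith : (0:ℝ) < 1 - mbar)]
  · -- mass scaling
    intro _
    set P : ℝ := ∏ j, k ^ ((1 - m j) / 2) with hPdef
    have hPpos : 0 < P := Finset.prod_pos fun j _ => hcpos j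
    let L : (Fin N → ℝ) →ₗ[ℝ] (Fin N → ℝ) :=
      Matrix.toLin' (Matrix.diagonal (fun j => k ^ ((1 - m j) / 2)))
    have hL : ∀ z : Fin N → ℝ, L z = fun j => k ^ ((1 - m j) / 2) * z j := by
      intro z; funext j
      simp [L, Matrix.toLin'_apply, Matrix.mulVec_diagonal]
    have hdet : LinearMap.det L = P := by
      simp [L, hPdef, Matrix.det_diagonal]
    have hmap : Measure.map L volume = ENNReal.ofReal P⁻¹ • volume := by
      rw [Measure.map_linearMap_addHaar_eq_smul_addHaar volume
        (by rw [hdet]; exact hPpos.ne')]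
      rw [hdet, abs_of_pos (inv_pos.mpr hPpos)]
    have hFm : AEStronglyMeasurable F (Measure.map L volume) :=
      hFC2.continuous.aestronglyMeasurable
    have hint : (∫ z, F (L z)) = P⁻¹ * ∫ z, F z := by
      rw [← MeasureTheory.integral_map
        (L.continuous_of_finiteDimensional.measurable.aemeasurable) hFm, hmap,
        integral_smul_measure, ENNReal.toReal_ofReal (inv_pos.mpr hPpos).le, smul_eq_mul]
    have step : (∫ y, Fk y) = k * (P⁻¹ * ∫ z, F z) := by
      calc (∫ y, Fk y) = ∫ y, k * F (L y) := by
            congr 1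
            funext y
            rw [hFk y, hL y]
        _ = k * ∫ y, F (L y) := integral_const_mul k _
        _ = k * (P⁻¹ * ∫ z, F z) := by rw [hint]
    have hsm : (∑ j, m j) = (N : ℝ) * mbar := by
      rw [hmbar]; field_simp
    have hsum : (∑ j : Fin N, (1 - m j) / 2) = 1 - β := by
      have h1 : (∑ j : Fin N, (1 - m j) / 2) = ((N : ℝ) - ∑ j, m j) / 2 := by
        rw [← Finset.sum_div, Finset.sum_sub_distrib]
        simp [Finset.card_univ]
      rw [h1, hsm, hβ]; ring
    have hP : P = k ^ (1 - β : ℝ) := by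
      rw [hPdef, ← Real.rpow_sum_of_pos hk, hsum]
    have hfinal : k * P⁻¹ = k ^ β := by
      rw [hP, ← Real.rpow_neg hk.le]
      calc k * k ^ (-(1 - β)) = k ^ (1:ℝ) * k ^ (-(1 - β)) := by rw [Real.rpow_one]
        _ = k ^ ((1:ℝ) + -(1 - β)) := (Real.rpow_add hk _ _).symm
        _ = k ^ β := by rw [show (1:ℝ) + -(1 - β) = β from by ring]
    rw [step, ← mul_assoc, hfinal]
end

section
/- Let N ≥ 1 and let g : ℝ^N → [0,∞) be continuous, integrable with ∫_{ℝ^N} g = M > 0, symmetric in each coordinate (g(…,−y_i,…) = g(y) for every i), and, for each i, nonincreasing in y_i on [0,∞) with the other coordinates fixed. Let 0 < r_0 < R be such that (a) ∫_{{y : some |y_i| ≥ R}} g(y) dy ≤ M/4, and (b) for every i, ∫_{A_i} g(y) dy ≤ M/(4N), where A_i := { y : |y_i| ≤ r_0 and |y_j| ≤ R for all j }. Then g(y) ≥ M · 2^{−(N+1)} (R − r_0)^{−N} for every y with |y_i| ≤ r_0 for all i. -/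
open MeasureTheory Set

/-!
The complement of `Ω = {y | r₀ < |y i| < R for all i}` is covered by `{∃ i, R ≤ |y i|}` and the
slabs `A i`, so (a) and (b) leave at least half of the mass in `Ω`. Separate symmetry and
monotonicity make `g y` a nonincreasing function of `(|y i|)ᵢ`; hence on `Ω` the function is at
most its value at the corner `(r₀, …, r₀)`, which in turn is at most `g y` whenever all
`|y i| ≤ r₀`. As `vol Ω ≤ (2 (R - r₀))ᴺ`, this gives `M / 2 ≤ g (r₀, …, r₀) 2ᴺ (R - r₀)ᴺ`.
-/

theorem MeasureTheory.setIntegral_iUnion_le_sum {α ι : Type*} [MeasurableSpace α] [Fintype ι]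
    {μ : Measure α} {f : α → ℝ} (hf : 0 ≤ f) (hfi : Integrable f μ) {s : ι → Set α}
    (hs : ∀ i, MeasurableSet (s i)) :
    ∫ x in ⋃ i, s i, f x ∂μ ≤ ∑ i, ∫ x in s i, f x ∂μ := by
  have hind : ∀ x, (⋃ i, s i).indicator f x ≤ ∑ i, (s i).indicator f x := by
    intro x
    by_cases hx : x ∈ ⋃ i, s i
    · obtain ⟨j, hj⟩ := mem_iUnion.1 hx
      rw [indicator_of_mem hx, ← indicator_of_mem hj f]
      exact Finset.single_le_sum (fun i _ => indicator_nonneg (fun x _ => hf x) x)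
        (Finset.mem_univ j)
    · rw [indicator_of_notMem hx]
      exact Finset.sum_nonneg fun i _ => indicator_nonneg (fun x _ => hf x) x
  rw [← integral_indicator (MeasurableSet.iUnion hs)]
  simp_rw [← integral_indicator (hs _)]
  rw [← integral_finsetSum _ fun i _ => hfi.indicator (hs i)]
  exact integral_mono (hfi.indicator (MeasurableSet.iUnion hs))
    (integrable_finsetSum _ fun i _ => hfi.indicator (hs i)) hind

theorem Real.volume_abs_preimage_Ioo_le {r R : ℝ} (h : r ≤ R) :
    volume (abs ⁻¹' Ioo r R) ≤ ENNReal.ofReal (2 * (R - r)) := by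
  have hsub : abs ⁻¹' Ioo r R ⊆ Ioo (-R) (-r) ∪ Ioo r R := by
    intro t ⟨hrt, htR⟩
    rcases le_or_gt 0 t with ht | ht
    · rw [abs_of_nonneg ht] at hrt htR
      exact Or.inr ⟨hrt, htR⟩
    · rw [abs_of_neg ht] at hrt htR
      exact Or.inl ⟨by linarith, by linarith⟩
  calc volume (abs ⁻¹' Ioo r R) ≤ volume (Ioo (-R) (-r)) + volume (Ioo r R) :=
        (measure_mono hsub).trans (measure_union_le _ _)
    _ = ENNReal.ofReal (2 * (R - r)) := by
      rw [Real.volume_Ioo, Real.volume_Ioo, ← ENNReal.ofReal_add (by linarith) (by linarith)]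
      ring_nf

section SeparatelySymmetric

variable {ι : Type*} [DecidableEq ι]

def SeparatelyEven (g : (ι → ℝ) → ℝ) : Prop :=
  ∀ i y, g (Function.update y i (-(y i))) = g y

def SeparatelyAntitoneOnNonneg (g : (ι → ℝ) → ℝ) : Prop :=
  ∀ i y a b, 0 ≤ a → a ≤ b → g (Function.update y i b) ≤ g (Function.update y i a)

variable {g : (ι → ℝ) → ℝ}

theorem SeparatelyEven.apply_update_abs (hg : SeparatelyEven g) (y : ι → ℝ) (i : ι) :
    g (Function.update y i |y i|) = g y := by
  rcases le_or_gt 0 (y i) with hy | hy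
  · rw [abs_of_nonneg hy, Function.update_eq_self]
  · rw [abs_of_neg hy, hg]

variable [Fintype ι]

theorem SeparatelyEven.apply_abs (hg : SeparatelyEven g) (y : ι → ℝ) :
    g (fun i => |y i|) = g y := by
  suffices ∀ s : Finset ι, g (s.piecewise (fun i => |y i|) y) = g y by
    simpa using this Finset.univ
  intro s
  induction s using Finset.induction_on with
  | empty => simp
  | insert j s hj ih =>
    rw [Finset.piecewise_insert, ← ih]
    conv_lhs => rw [← Finset.piecewise_eq_of_notMem s (fun i => |y i|) y hj]
    exact hg.apply_update_abs _ j

theorem SeparatelyAntitoneOnNonneg.apply_le_apply (hg : SeparatelyAntitoneOnNonneg g)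
    {a b : ι → ℝ} (ha : 0 ≤ a) (hab : a ≤ b) : g b ≤ g a := by
  suffices ∀ s : Finset ι, g b ≤ g (s.piecewise a b) by
    simpa using this Finset.univ
  intro s
  induction s using Finset.induction_on with
  | empty => simp
  | insert j s hj ih =>
    calc g b ≤ g (s.piecewise a b) := ih
      _ = g (Function.update (s.piecewise a b) j (b j)) := by
        rw [← Finset.piecewise_eq_of_notMem s a b hj, Function.update_eq_self]
      _ ≤ g ((insert j s).piecewise a b) := by
        rw [Finset.piecewise_insert]
        exact hg j _ _ _ (ha j) (hab j)

theorem apply_le_apply_of_abs_le (hsym : SeparatelyEven g) (hmono : SeparatelyAntitoneOnNonneg g)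
    {y z : ι → ℝ} (h : ∀ i, |y i| ≤ |z i|) : g z ≤ g y := by
  rw [← hsym.apply_abs z, ← hsym.apply_abs y]
  exact hmono.apply_le_apply (fun i => abs_nonneg _) h

end SeparatelySymmetric

section Annuli

variable {ι : Type*} [Fintype ι]

def annuliPi (ι : Type*) (r R : ℝ) : Set (ι → ℝ) :=
  univ.pi fun _ => abs ⁻¹' Ioo r R

theorem measurableSet_annuliPi (r R : ℝ) : MeasurableSet (annuliPi ι r R) :=
  .univ_pi fun _ => by measurability

theorem volume_annuliPi_le {r R : ℝ} (h : r ≤ R) :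
    volume (annuliPi ι r R) ≤ ENNReal.ofReal ((2 * (R - r)) ^ Fintype.card ι) := by
  rw [annuliPi, volume_pi_pi, ENNReal.ofReal_pow (by linarith)]
  exact Finset.prod_le_pow_card _ _ _ fun _ _ => Real.volume_abs_preimage_Ioo_le h

theorem compl_annuliPi_subset (r R : ℝ) :
    (annuliPi ι r R)ᶜ ⊆ {y | ∃ i, R ≤ |y i|} ∪ ⋃ i, {y | |y i| ≤ r ∧ ∀ j, |y j| ≤ R} := by
  intro y hy
  simp only [annuliPi, mem_compl_iff, mem_pi, mem_univ, true_implies, mem_preimage, mem_Ioo,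
    not_forall, not_and_or, not_lt] at hy
  obtain ⟨i, hi⟩ := hy
  by_cases hout : ∃ j, R ≤ |y j|
  · exact Or.inl hout
  · push Not at hout
    have hir : |y i| ≤ r := hi.resolve_right (not_le.2 (hout i))
    exact Or.inr (mem_iUnion.2 ⟨i, hir, fun j => (hout j).le⟩)

theorem setIntegral_compl_annuliPi_le {g : (ι → ℝ) → ℝ} (hg : 0 ≤ g) (hgi : Integrable g)
    (r R : ℝ) :
    ∫ y in (annuliPi ι r R)ᶜ, g y ≤ (∫ y in {y | ∃ i, R ≤ |y i|}, g y)
      + ∑ i, ∫ y in {y | |y i| ≤ r ∧ ∀ j, |y j| ≤ R}, g y := by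
  let S : Option ι → Set (ι → ℝ) :=
    fun o => o.elim {y | ∃ i, R ≤ |y i|} fun i => {y | |y i| ≤ r ∧ ∀ j, |y j| ≤ R}
  have hcover : (annuliPi ι r R)ᶜ ⊆ ⋃ o, S o := by
    rw [iUnion_option]
    exact compl_annuliPi_subset r R
  calc ∫ y in (annuliPi ι r R)ᶜ, g y ≤ ∫ y in ⋃ o, S o, g y :=
        setIntegral_mono_set hgi.integrableOn (.of_forall hg) hcover.eventuallyLE
    _ ≤ ∑ o, ∫ y in S o, g y :=
        setIntegral_iUnion_le_sum hg hgi fun o => by cases o <;> simp only [S] <;> measurability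
    _ = _ := Fintype.sum_option _

theorem setIntegral_annuliPi_le [DecidableEq ι] {g : (ι → ℝ) → ℝ} (hg : 0 ≤ g)
    (hsym : SeparatelyEven g) (hmono : SeparatelyAntitoneOnNonneg g) {r R : ℝ} (hr : 0 ≤ r)
    (hrR : r ≤ R) :
    ∫ y in annuliPi ι r R, g y ≤ g (fun _ => r) * (2 * (R - r)) ^ Fintype.card ι := by
  have hvol := volume_annuliPi_le (ι := ι) hrR
  have hcorner : ∀ y ∈ annuliPi ι r R, ‖g y‖ ≤ g fun _ => r := fun y hy => by
    rw [Real.norm_of_nonneg (hg y)]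
    exact apply_le_apply_of_abs_le hsym hmono fun i => by
      simpa [abs_of_nonneg hr] using (hy i trivial).1.le
  calc ∫ y in annuliPi ι r R, g y ≤ ‖∫ y in annuliPi ι r R, g y‖ := Real.le_norm_self _
    _ ≤ g (fun _ => r) * volume.real (annuliPi ι r R) :=
      norm_setIntegral_le_of_norm_le_const (hvol.trans_lt ENNReal.ofReal_lt_top) hcorner
    _ ≤ g (fun _ => r) * (2 * (R - r)) ^ Fintype.card ι := by
      gcongr
      · exact hg _
      · exact ENNReal.toReal_le_of_le_ofReal (pow_nonneg (by linarith) _) hvol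

end Annuli

theorem quantitative_positivity_general (N : ℕ)
    (g : (Fin N → ℝ) → ℝ) (hgnn : ∀ y, 0 ≤ g y)
    (hgint : Integrable g) (M : ℝ) (hM : (∫ y, g y) = M)
    (hsym : ∀ (i : Fin N) (y : Fin N → ℝ),
      g (Function.update y i (-(y i))) = g y)
    (hmono : ∀ (i : Fin N) (y : Fin N → ℝ) (a b : ℝ), 0 ≤ a → a ≤ b →
      g (Function.update y i b) ≤ g (Function.update y i a))
    (r₀ R : ℝ) (hr₀ : 0 < r₀) (hr₀R : r₀ < R)
    (ha : (∫ y in {y : Fin N → ℝ | ∃ i, R ≤ |y i|}, g y) ≤ M / 4)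
    (hb : ∀ i : Fin N,
      (∫ y in {y : Fin N → ℝ | |y i| ≤ r₀ ∧ ∀ j, |y j| ≤ R}, g y) ≤ M / (4 * N)) :
    ∀ y : Fin N → ℝ, (∀ i, |y i| ≤ r₀) →
      M * ((2 : ℝ) ^ (N + 1))⁻¹ * ((R - r₀) ^ N)⁻¹ ≤ g y := by
  intro y hy
  have hM0 : 0 ≤ M := hM ▸ integral_nonneg hgnn
  have hRr : 0 < R - r₀ := sub_pos.2 hr₀R
  have hnear : ∑ i, ∫ z in {z : Fin N → ℝ | |z i| ≤ r₀ ∧ ∀ j, |z j| ≤ R}, g z ≤ M / 4 :=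
    calc _ ≤ ∑ _i : Fin N, M / (4 * N) := Finset.sum_le_sum fun i _ => hb i
      -- `N / N ≤ 1` also covers `N = 0`, where `M / (4 * N) = 0`
      _ = M / 4 * (N / N) := by
        rw [Finset.sum_const, Finset.card_univ, Fintype.card_fin, nsmul_eq_mul]
        ring
      _ ≤ M / 4 := mul_le_of_le_one_right (by positivity) (div_self_le_one _)
  have hmass : M / 2 ≤ ∫ z in annuliPi (Fin N) r₀ R, g z := by
    have hcompl := setIntegral_compl_annuliPi_le hgnn hgint r₀ R
    linarith [integral_add_compl (measurableSet_annuliPi (ι := Fin N) r₀ R) hgint]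
  have hΩ := setIntegral_annuliPi_le hgnn hsym hmono hr₀.le hr₀R.le
  rw [Fintype.card_fin, mul_pow] at hΩ
  have hcorner : (g fun _ => r₀) ≤ g y :=
    apply_le_apply_of_abs_le hsym hmono fun i => by simpa [abs_of_pos hr₀] using hy i
  calc M * ((2 : ℝ) ^ (N + 1))⁻¹ * ((R - r₀) ^ N)⁻¹ = M / 2 / (2 ^ N * (R - r₀) ^ N) := by
        rw [pow_succ]; field_simp
    _ ≤ g fun _ => r₀ := by
        rw [div_le_iff₀ (by positivity)]; linarith
    _ ≤ g y := hcorner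

/-- the measure-theoretic core of the quantitative positivity lemma:
a separately symmetric, separately nonincreasing, continuous integrable function of
mass `M > 0` whose mass neither escapes to infinity (a) nor concentrates near the
coordinate hyperplanes (b) is bounded below by `M 2^{-(N+1)} (R-r₀)^{-N}` on the box
`{|y_i| ≤ r₀ ∀i}`. -/
theorem quantitative_positivity (N : ℕ) (hN : 1 ≤ N)
    (g : (Fin N → ℝ) → ℝ) (hgcont : Continuous g) (hgnn : ∀ y, 0 ≤ g y)
    (hgint : Integrable g) (M : ℝ) (hM : (∫ y, g y) = M) (hMpos : 0 < M)
    (hsym : ∀ (i : Fin N) (y : Fin N → ℝ),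
      g (Function.update y i (-(y i))) = g y)
    (hmono : ∀ (i : Fin N) (y : Fin N → ℝ) (a b : ℝ), 0 ≤ a → a ≤ b →
      g (Function.update y i b) ≤ g (Function.update y i a))
    (r₀ R : ℝ) (hr₀ : 0 < r₀) (hr₀R : r₀ < R)
    (ha : (∫ y in {y : Fin N → ℝ | ∃ i, R ≤ |y i|}, g y) ≤ M / 4)
    (hb : ∀ i : Fin N,
      (∫ y in {y : Fin N → ℝ | |y i| ≤ r₀ ∧ ∀ j, |y j| ≤ R}, g y) ≤ M / (4 * N)) :
    ∀ y : Fin N → ℝ, (∀ i, |y i| ≤ r₀) →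
      M * ((2 : ℝ) ^ (N + 1))⁻¹ * ((R - r₀) ^ N)⁻¹ ≤ g y :=
  quantitative_positivity_general N g hgnn hgint M hM hsym hmono r₀ R hr₀ hr₀R ha hb
end
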